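/- Let μ be a finite signed measure on ℤ^d and f : ℤ^d → ℝ, and let m, k, J, N > 0 and ϱ ∈ ℤ^d be such that: (a) |f(x) − f(y)| < m for every x, y ∈ ℤ^d with ‖x − y‖₁ = 1; (b) |f(x) + f(w) − f(y) − f(z)| < k for every x, y, z, w ∈ ℤ^d and i, j ∈ {1,…,d} such that x − y = z − w = e_i and x − z = y − w = e_j; (c) Σ_x μ(x) = 0; (d) ‖Σ_x x·μ(x)‖₁ ≤ N; (e) Σ_x ‖x − ϱ‖₁² · |μ(x)| < J. Then |Σ_x f(x) μ(x)| ≤ mN + kJ. -/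

import Mathlib

open MeasureTheory Filter

namespace RWRE

/-- Lattice points of `ℤ^d`. -/
abbrev Zd (d : ℕ) := Fin d → ℤ

/-- Environments: each site carries a function on steps. -/
abbrev Env (d : ℕ) := Zd d → Zd d → ℝ

variable {d : ℕ}

/-- ℓ¹ norm on `ℤ^d`. -/
def norm1 (x : Zd d) : ℤ := ∑ i, |x i|

/-- ℓ¹ norm of a real vector. -/
noncomputable def norm1R (x : Fin d → ℝ) : ℝ := ∑ i, |x i|

/-- Euclidean norm of an integer vector. -/
noncomputable def norm2 (x : Zd d) : ℝ := Real.sqrt (∑ i, ((x i : ℝ)) ^ 2)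

/-- sup-norm of an integer vector. -/
def normInf (x : Zd d) : ℕ := Finset.univ.sup fun i => (x i).natAbs

/-- sup-norm of a real vector. -/
noncomputable def normInfR (x : Fin d → ℝ) : ℝ := ⨆ i, |x i|

/-- dot product of an integer vector with a real direction. -/
noncomputable def rdot (x : Zd d) (l : Fin d → ℝ) : ℝ := ∑ i, (x i : ℝ) * l i

/-- A probability vector supported on the `2d` unit vectors of `ℤ^d`. -/
def ProbVec (p : Zd d → ℝ) : Prop :=
  (∀ e, 0 ≤ p e) ∧ (∀ e, norm1 e ≠ 1 → p e = 0) ∧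
    (∑ i : Fin d, (p (Pi.single i 1) + p (-Pi.single i 1))) = 1

/-- A valid environment assigns a probability vector on unit steps to each site. -/
def ValidEnv (ω : Env d) : Prop := ∀ x, ProbVec (ω x)

/-- Uniform ellipticity of the environment measure. -/
def UniformlyElliptic (Pr : Measure (Env d)) : Prop :=
  ∃ κ : ℝ, 0 < κ ∧ Pr {ω | ∀ e : Zd d, norm1 e = 1 → κ ≤ ω 0 e} = 1

/-- The coordinates of the environment are i.i.d. under `Pr`. -/
def IIDEnv (Pr : Measure (Env d)) : Prop :=
  (∀ x y : Zd d, Pr.map (fun ω => ω x) = Pr.map (fun ω => ω y)) ∧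
    ProbabilityTheory.iIndepFun (fun x ω => ω x) Pr

/-- `P x ω` is the quenched law of the RWRE started at `x` in environment `ω`:
a probability measure on paths whose cylinder probabilities are given by the
products of the transition probabilities of the environment. -/
def IsQuenchedLaw (P : Zd d → Env d → Measure (ℕ → Zd d)) : Prop :=
  (∀ x, Measurable (P x)) ∧
    ∀ x ω, IsProbabilityMeasure (P x ω) ∧
      ∀ (n : ℕ) (p : ℕ → Zd d),
        P x ω {f | ∀ i ≤ n, f i = p i} =
          (if p 0 = x then 1 else 0) *
            ∏ i ∈ Finset.range n, ENNReal.ofReal (ω (p i) (p (i + 1) - p i))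

/-- The annealed (averaged) law `P_x`. -/
noncomputable def annealed (Pr : Measure (Env d)) (P : Zd d → Env d → Measure (ℕ → Zd d))
    (x : Zd d) : Measure (ℕ → Zd d) :=
  Pr.bind (P x)

/-- Hitting time of a set `B ⊆ ℤ^d` (with value `⊤` if `B` is never hit). -/
noncomputable def hitTime (B : Set (Zd d)) (f : ℕ → Zd d) : ℕ∞ :=
  sInf ((fun n : ℕ => (n : ℕ∞)) '' {n | f n ∈ B})

/-- `T_u^l`: first time the walk's dot product with `l` exceeds `u`. -/
noncomputable def dirHit (l : Fin d → ℝ) (u : ℝ) (f : ℕ → Zd d) : ℕ∞ :=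
  sInf ((fun n : ℕ => (n : ℕ∞)) '' {n | u < rdot (f n) l})

/-- Outer boundary of a subset of `ℤ^d`. -/
def bdry (B : Set (Zd d)) : Set (Zd d) := {x | x ∉ B ∧ ∃ y ∈ B, norm1 (x - y) = 1}

/-- The exit position `X_{T_{∂B}}` of a path from the set `B`. -/
noncomputable def exitPos (B : Set (Zd d)) (f : ℕ → Zd d) : Zd d :=
  f (hitTime (bdry B) f).toNat

/-- Sznitman's condition `(T)_γ` in direction `l`. -/
noncomputable def CondT (P0 : Measure (ℕ → Zd d)) (γ : ℝ) (l : Fin d → ℝ) : Prop :=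
  ∃ ε : ℝ, 0 < ε ∧
    ∀ l' : Fin d → ℝ, (∑ i, (l' i) ^ 2) = 1 → (∑ i, (l' i - l i) ^ 2) < ε →
      ∀ b : ℝ, 0 < b →
        limsup (fun L : ℝ =>
            L ^ (-γ) *
              Real.log ((P0 {f | dirHit (-l') (b * L) f < dirHit l' L f}).toReal))
          atTop < 0

/-- `v` is the asymptotic direction of the walk under `P0`. -/
def IsAsympDir (P0 : Measure (ℕ → Zd d)) (v : Fin d → ℝ) : Prop :=
  P0 {f | Tendsto (fun n => fun i => (f n i : ℝ) / norm2 (f n)) atTop (nhds v)} = 1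

/-- The scales `R_k(N) = ⌈exp((log log N)^{k+1})⌉`. -/
noncomputable def Rnat (k : ℕ) (N : ℝ) : ℕ := ⌈Real.exp ((Real.log (Real.log N)) ^ (k + 1))⌉₊

/-- The scales `R_k(N)` as real numbers. -/
noncomputable def R (k : ℕ) (N : ℝ) : ℝ := (Rnat k N : ℝ)

/-- `n` is a regeneration time of the path `f` in the direction of coordinate `j`. -/
def IsRegenTime (j : Fin d) (f : ℕ → Zd d) (n : ℕ) : Prop :=
  0 < n ∧ (∀ k < n, f k j < f n j) ∧ ∀ k, n ≤ k → f n j ≤ f k j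

/-- `tau j f n` is the `n`-th regeneration time of `f` (and `tau j f 0 = 0`). -/
noncomputable def tau (j : Fin d) (f : ℕ → Zd d) : ℕ → ℕ
  | 0 => 0
  | n + 1 => Nat.nth (IsRegenTime j f) n

/-- The radius `X^{*(n)}` of the `n`-th regeneration. -/
noncomputable def regenRadius (j : Fin d) (f : ℕ → Zd d) (n : ℕ) : ℕ :=
  (Finset.Icc (tau j f (n - 1)) (tau j f n)).sup fun k =>
    (norm1 (f k - f (tau j f (n - 1)))).toNat

/-- The event `A_N = {X^{*(n)} < R₂(N) for all 1 ≤ n ≤ 2N²}`. -/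
noncomputable def eventA (j : Fin d) (N : ℕ) : Set (ℕ → Zd d) :=
  {f | ∀ n : ℕ, 1 ≤ n → n ≤ 2 * N ^ 2 → (regenRadius j f n : ℝ) < R 2 N}

/-- The projection `π̃^j_{v⊥} y = y − (y·e_j/(v·e_j)) v`. -/
noncomputable def perpProj (j : Fin d) (v : Fin d → ℝ) (y : Zd d) : Fin d → ℝ :=
  fun i => (y i : ℝ) - ((y j : ℝ) / v j) * v i

/-- The block `𝒫(x,N)`. -/
noncomputable def blockP (j : Fin d) (v : Fin d → ℝ) (x : Zd d) (N : ℝ) : Set (Zd d) :=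
  {y | -(N ^ 2) < ((y - x) j : ℝ) ∧ ((y - x) j : ℝ) < N ^ 2 ∧
    normInfR (perpProj j v (y - x)) < R 6 N * N}

/-- The middle third `𝒫̃(x,N)`. -/
noncomputable def blockPmid (j : Fin d) (v : Fin d → ℝ) (x : Zd d) (N : ℝ) : Set (Zd d) :=
  {y | -(N ^ 2) / 3 < ((y - x) j : ℝ) ∧ ((y - x) j : ℝ) < N ^ 2 / 3 ∧
    normInfR (perpProj j v (y - x)) < R 6 N * N / 3}

/-- The right boundary part `∂₊𝒫(x,N)`. -/
noncomputable def blockPplus (j : Fin d) (v : Fin d → ℝ) (x : Zd d) (N : ℝ) : Set (Zd d) :=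
  {y | y ∈ bdry (blockP j v x N) ∧ ((y - x) j : ℝ) = N ^ 2}

/-- The event that the walk leaves `𝒫(x,N)` through its right boundary part,
i.e. `T_{∂𝒫(x,N)} = T_{∂₊𝒫(x,N)}`. -/
noncomputable def rightExit (j : Fin d) (v : Fin d → ℝ) (x : Zd d) (N : ℝ) :
    Set (ℕ → Zd d) :=
  {f | hitTime (bdry (blockP j v x N)) f = hitTime (blockPplus j v x N) f}

/-- Conditional law `μ(· | A)`. -/
noncomputable def condLaw {α : Type*} [MeasurableSpace α] (μ : Measure α) (A : Set α) :
    Measure α :=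
  (μ A)⁻¹ • μ.restrict A

/-- The quenched conditional exit law `μ^N_{z,x,ω}`. -/
noncomputable def muQue (P : Zd d → Env d → Measure (ℕ → Zd d)) (j : Fin d)
    (v : Fin d → ℝ) (ω : Env d) (z x : Zd d) (N : ℝ) : Measure (Zd d) :=
  (condLaw (P z ω) (rightExit j v x N)).map (exitPos (blockP j v x N))

/-- The annealed conditional exit law `μ^N_{z,x}`. -/
noncomputable def muAnn (Pr : Measure (Env d)) (P : Zd d → Env d → Measure (ℕ → Zd d))
    (j : Fin d) (v : Fin d → ℝ) (z x : Zd d) (N : ℝ) : Measure (Zd d) :=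
  (condLaw (annealed Pr P z) (rightExit j v x N)).map (exitPos (blockP j v x N))

/-- Coordinatewise expectation of a measure on `ℤ^d`. -/
noncomputable def vecExp (ν : Measure (Zd d)) : Fin d → ℝ := fun i => ∫ x, (x i : ℝ) ∂ν

/-- Variance `Var_μ = E_μ ‖Z − E_μ Z‖₁²`. -/
noncomputable def var1 (ν : Measure (Zd d)) : ℝ :=
  ∫ x, (norm1R fun i => (x i : ℝ) - vecExp ν i) ^ 2 ∂ν

/-- A `(d−1)`-dimensional hypercube of side length `s` in the hyperplane `{y·e_j = c}`. -/
def hypercube (j : Fin d) (c : ℤ) (a : Zd d) (s : ℕ) : Set (Zd d) :=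
  {y | y j = c ∧ ∀ i, i ≠ j → a i ≤ y i ∧ y i < a i + s}

/-- Rapidly decreasing sequences `𝒮(ℕ)`. -/
def RapidDecay (a : ℕ → ℝ) : Prop := ∀ k : ℕ, ∃ C : ℝ, ∀ N : ℕ, |(N : ℝ) ^ k * a N| ≤ C

/-- The scales `L_k`: `L₁ = ⌊L^ψ⌋`, `L_{k+1} = L_k ⌊L^χ⌋`. -/
noncomputable def scaleL (ψ χ : ℝ) (L : ℕ) (k : ℕ) : ℕ :=
  ⌊(L : ℝ) ^ ψ⌋₊ * ⌊(L : ℝ) ^ χ⌋₊ ^ (k - 1)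

/-- `ι`: the smallest `k ≥ 1` with `L_k² > L^{1+δ}`. -/
noncomputable def iota (ψ χ δ : ℝ) (L : ℕ) : ℕ :=
  sInf {k : ℕ | 1 ≤ k ∧ (L : ℝ) ^ (1 + δ) < ((scaleL ψ χ L k : ℕ) : ℝ) ^ 2}

/-- The sublattice `ℒ_N = N²ℤ × ⌊R₆(N)N/4⌋ℤ^{d−1}`. -/
noncomputable def latticeL (j : Fin d) (N : ℕ) : Set (Zd d) :=
  {x | ((N ^ 2 : ℕ) : ℤ) ∣ x j ∧ ∀ i, i ≠ j → ((Rnat 6 (N : ℝ) * N / 4 : ℕ) : ℤ) ∣ x i}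

/-- The tube `C_L`. -/
noncomputable def bigC (j : Fin d) (v : Fin d → ℝ) (δ : ℝ) (L : ℕ) : Set (Zd d) :=
  {x | 0 ≤ x j ∧ ((x j : ℝ)) ≤ (L : ℝ) ^ (1 + δ) ∧
    normInfR (perpProj j v x) ≤ (L : ℝ) ^ (3 * δ) + (x j : ℝ) * (L : ℝ) ^ (-(2 * δ))}

/-- The right boundary part `∂₊C_L`. -/
noncomputable def bigCplus (j : Fin d) (v : Fin d → ℝ) (δ : ℝ) (L : ℕ) : Set (Zd d) :=
  {x | x ∈ bdry (bigC j v δ L) ∧ (L : ℝ) ^ (1 + δ) < (x j : ℝ)}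

/-- The block `𝒫(x,N)` is good with respect to `ω`. -/
noncomputable def GoodBlock (Pr : Measure (Env d)) (P : Zd d → Env d → Measure (ℕ → Zd d))
    (j : Fin d) (v : Fin d → ℝ) (γ ϑ : ℝ) (ω : Env d) (x : Zd d) (N : ℝ) : Prop :=
  ∀ z ∈ blockPmid j v x N,
    P z ω (rightExit j v x N)ᶜ ≤ ENNReal.ofReal (Real.exp (-(R 1 N ^ γ))) ∧
    norm1R (fun i => vecExp (muQue P j v ω z x N) i - vecExp (muAnn Pr P j v z x N) i) ≤
      R 4 N ∧
    ∀ (c : ℤ) (a : Zd d),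
      hypercube j c a ⌈N ^ ϑ⌉₊ ⊆ blockPplus j v x N →
        |(muQue P j v ω z x N (hypercube j c a ⌈N ^ ϑ⌉₊)).toReal -
            (muAnn Pr P j v z x N (hypercube j c a ⌈N ^ ϑ⌉₊)).toReal| <
          N ^ ((ϑ - 1) * ((d : ℝ) - 1) - ϑ * ((d : ℝ) - 1) / ((d : ℝ) + 1))

/-- `(λ,K)`-closeness of `μ₂` to `μ₁` (Definition 3.7): a coupling `(Z₁, Z₂, Z₀)`. -/
noncomputable def Close (lam K : ℝ) (μ₁ μ₂ : Measure (Zd d)) : Prop :=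
  ∃ μ : Measure (Zd d × Zd d × Zd d), IsProbabilityMeasure μ ∧
    μ.map (fun p => p.1) = μ₁ ∧ μ.map (fun p => p.2.1) = μ₂ ∧
    (μ {p | p.1 ≠ p.2.2}).toReal ≤ lam ∧
    μ {p | (norm1 (p.2.2 - p.2.1) : ℝ) ≤ K} = 1 ∧
    (∀ i : Fin d, (∫ p, ((p.1 : Zd d) i : ℝ) ∂μ) = ∫ p, ((p.2.2 : Zd d) i : ℝ) ∂μ) ∧
    (∑' x : Zd d,
        (norm1R fun i => (x i : ℝ) - ∫ p, ((p.1 : Zd d) i : ℝ) ∂μ) ^ 2 *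
          |(μ {p | p.1 = x}).toReal - (μ {p | p.2.2 = x}).toReal|) ≤
      lam * ∫ p, (norm1R fun i => ((p.1 : Zd d) i : ℝ) - ∫ q, ((q.1 : Zd d) i : ℝ) ∂μ) ^ 2 ∂μ

/-- The box of the effective criterion, specified by a rotation matrix `Rm`
(mapping `e_j` to the columns of `Rm`). -/
noncomputable def ecBox (j : Fin d) (Rm : Matrix (Fin d) (Fin d) ℝ) (L : ℝ) : Set (Zd d) :=
  {x | (-(L - 2) < rdot x fun i => Rm i j) ∧ (rdot x fun i => Rm i j) < L + 2 ∧
    ∀ m : Fin d, m ≠ j → |rdot x fun i => Rm i m| < L ^ 2}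

/-- The right boundary part `∂₊B` of the effective-criterion box. -/
noncomputable def ecBplus (j : Fin d) (Rm : Matrix (Fin d) (Fin d) ℝ) (L : ℝ) : Set (Zd d) :=
  {x | x ∈ bdry (ecBox j Rm L) ∧ L + 2 ≤ (rdot x fun i => Rm i j) ∧
    ∀ m : Fin d, m ≠ j → |rdot x fun i => Rm i m| < L ^ 2}

/-- `P_{0,ω}(X_{T_{∂B}} ∈ ∂₊B)` for the effective-criterion box. -/
noncomputable def ecExitProb (P : Zd d → Env d → Measure (ℕ → Zd d)) (j : Fin d)
    (Rm : Matrix (Fin d) (Fin d) ℝ) (ω : Env d) (L : ℝ) : ℝ :=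
  (P 0 ω {f | hitTime (bdry (ecBox j Rm L)) f = hitTime (ecBplus j Rm L) f}).toReal

/-- `ρ = P_{0,ω}(X_{T_{∂B}} ∉ ∂₊B)/P_{0,ω}(X_{T_{∂B}} ∈ ∂₊B)`. -/
noncomputable def ecRho (P : Zd d → Env d → Measure (ℕ → Zd d)) (j : Fin d)
    (Rm : Matrix (Fin d) (Fin d) ℝ) (ω : Env d) (L : ℝ) : ℝ :=
  (P 0 ω {f | hitTime (bdry (ecBox j Rm L)) f = hitTime (ecBplus j Rm L) f}ᶜ).toReal /
    ecExitProb P j Rm ω L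

end RWRE

/-!
Expand `f` to first order at `ϱ` with the discrete gradient `D i = f (ϱ + e i) - f ϱ`.
Bounded second differences make each `Δ_[e i] f` `k`-Lipschitz along lattice paths, so
`|Δ_[e i] f y - D i| ≤ k ‖y - ϱ‖₁`; summing these along a shortest path from `ϱ` to `x` bounds
the Taylor remainder by `k ‖x - ϱ‖₁²`. Integrated against `μ`, the constant term vanishes
because `μ` has mass zero, the linear term is `∑ i, D i * ∑ x, x i * μ x`, of size at most `m N`,
and the remainder contributes at most `k J`.
-/

namespace RWRE

open scoped fwdDiff

variable {d : ℕ}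

lemma norm1_nonneg (x : Zd d) : 0 ≤ norm1 x :=
  Finset.sum_nonneg fun _ _ => abs_nonneg _

lemma norm1_eq_zero {x : Zd d} : norm1 x = 0 ↔ x = 0 := by
  simp [norm1, Finset.sum_eq_zero_iff_of_nonneg, funext_iff]

lemma norm1_neg (x : Zd d) : norm1 (-x) = norm1 x := by
  simp [norm1]

lemma abs_apply_le_norm1 (x : Zd d) (i : Fin d) : |x i| ≤ norm1 x :=
  Finset.single_le_sum (f := fun j => |x j|) (fun _ _ => abs_nonneg _) (Finset.mem_univ i)

lemma norm1_single (i : Fin d) : norm1 (Pi.single i 1 : Zd d) = 1 := by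
  simp [norm1, Pi.single_apply, apply_ite abs]

lemma norm1_eq_norm1_sub_single_add_one {v : Zd d} {i : Fin d} (h : 0 < v i) :
    norm1 v = norm1 (v - Pi.single i 1) + 1 := by
  have key : ∀ j, |v j| = |(v - Pi.single i 1 : Zd d) j| + if j = i then 1 else 0 := by
    intro j
    by_cases hj : j = i
    · subst hj
      simp only [Pi.sub_apply, Pi.single_eq_same, if_true]
      rw [abs_of_pos h, abs_of_nonneg (by omega)]
      ring
    · simp [hj]
  simp only [norm1, key, Finset.sum_add_distrib, Finset.sum_ite_eq', Finset.mem_univ, if_true]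

lemma exists_neighbour_closer {x ϱ : Zd d} (h : x ≠ ϱ) :
    ∃ (i : Fin d) (y : Zd d), (x = y + Pi.single i 1 ∨ y = x + Pi.single i 1) ∧
      norm1 (x - ϱ) = norm1 (y - ϱ) + 1 := by
  obtain ⟨i, hi⟩ : ∃ i, x i ≠ ϱ i := Function.ne_iff.mp h
  rcases hi.lt_or_gt with hlt | hgt
  · refine ⟨i, x + Pi.single i 1, Or.inr rfl, ?_⟩
    have := norm1_eq_norm1_sub_single_add_one (v := ϱ - x) (i := i) (by simpa using hlt)
    rwa [← norm1_neg, neg_sub, ← norm1_neg (ϱ - x - _), neg_sub, sub_sub_eq_add_sub,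
      add_comm (Pi.single i 1)] at this
  · refine ⟨i, x - Pi.single i 1, Or.inl (sub_add_cancel _ _).symm, ?_⟩
    have := norm1_eq_norm1_sub_single_add_one (v := x - ϱ) (i := i) (by simpa using hgt)
    rwa [sub_right_comm] at this

theorem abs_sub_le_norm1_mul_of_abs_fwdDiff_le {h : Zd d → ℝ} {ϱ : Zd d} {c : ℤ → ℝ}
    (hc : Monotone c)
    (hstep : ∀ y i, |Δ_[Pi.single i 1] h y| ≤
      c (max (norm1 (y + Pi.single i 1 - ϱ)) (norm1 (y - ϱ))))
    (x : Zd d) : |h x - h ϱ| ≤ norm1 (x - ϱ) * c (norm1 (x - ϱ)) := by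
  suffices ∀ n : ℕ, ∀ x, norm1 (x - ϱ) = n → |h x - h ϱ| ≤ n * c n by
    obtain ⟨n, hn⟩ := Int.eq_ofNat_of_zero_le (norm1_nonneg (x - ϱ))
    rw [hn]
    exact this n x hn
  intro n
  induction n with
  | zero =>
    intro x hx
    simp [sub_eq_zero.mp (norm1_eq_zero.mp hx)]
  | succ n ih =>
    intro x hx
    have hne : x ≠ ϱ := by rintro rfl; simp [norm1] at hx; omega
    obtain ⟨i, y, hxy, hdist⟩ := exists_neighbour_closer hne
    have hy : norm1 (y - ϱ) = n := by omega
    have hstep_xy : |h x - h y| ≤ c (n + 1) := by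
      rcases hxy with rfl | rfl
      · simpa [fwdDiff, hx, hy] using hstep y i
      · simpa [fwdDiff, abs_sub_comm, hx, hy] using hstep x i
    calc |h x - h ϱ| ≤ |h x - h y| + |h y - h ϱ| := abs_sub_le _ _ _
      _ ≤ c (n + 1) + n * c n := add_le_add hstep_xy (ih y hy)
      _ ≤ c (n + 1) + n * c (n + 1) := by gcongr; exact hc (by omega)
      _ = (n + 1 : ℕ) * c (n + 1 : ℕ) := by push_cast; ring

lemma abs_fwdDiff_sub_le {f : Zd d → ℝ} {k : ℝ}
    (hf : ∀ y i j, |Δ_[Pi.single j 1] (Δ_[Pi.single i 1] f) y| ≤ k) (ϱ p : Zd d) (i : Fin d) :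
    |Δ_[Pi.single i 1] f p - Δ_[Pi.single i 1] f ϱ| ≤ norm1 (p - ϱ) * k :=
  abs_sub_le_norm1_mul_of_abs_fwdDiff_le monotone_const (fun y j => hf y i j) p

noncomputable def taylorRem (f : Zd d → ℝ) (ϱ x : Zd d) : ℝ :=
  f x - f ϱ - ∑ i, ((x i - ϱ i : ℤ) : ℝ) * Δ_[Pi.single i 1] f ϱ

lemma fwdDiff_taylorRem (f : Zd d → ℝ) (ϱ y : Zd d) (j : Fin d) :
    Δ_[Pi.single j 1] (taylorRem f ϱ) y =
      Δ_[Pi.single j 1] f y - Δ_[Pi.single j 1] f ϱ := by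
  have hlin : ∑ i, (((y + Pi.single j 1 : Zd d) i - ϱ i : ℤ) : ℝ) * Δ_[Pi.single i 1] f ϱ =
      ∑ i, ((y i - ϱ i : ℤ) : ℝ) * Δ_[Pi.single i 1] f ϱ + Δ_[Pi.single j 1] f ϱ := by
    simp [add_sub_right_comm, add_mul, Finset.sum_add_distrib, Pi.single_apply]
  simp only [fwdDiff, taylorRem] at hlin ⊢
  linarith

lemma taylorRem_add_affine (f : Zd d → ℝ) (ϱ x : Zd d) :
    taylorRem f ϱ x + ((f ϱ - ∑ i, (ϱ i : ℝ) * Δ_[Pi.single i 1] f ϱ) +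
      ∑ i, Δ_[Pi.single i 1] f ϱ * x i) = f x := by
  simp only [taylorRem, Int.cast_sub, sub_mul, Finset.sum_sub_distrib, mul_comm (x _ : ℝ)]
  ring

theorem abs_taylorRem_le {f : Zd d → ℝ} {k : ℝ} (hk : 0 ≤ k)
    (hf : ∀ y i j, |Δ_[Pi.single j 1] (Δ_[Pi.single i 1] f) y| ≤ k) (ϱ x : Zd d) :
    |taylorRem f ϱ x| ≤ k * norm1 (x - ϱ) ^ 2 := by
  have hstep : ∀ y j, |Δ_[Pi.single j 1] (taylorRem f ϱ) y| ≤
      k * max (norm1 (y + Pi.single j 1 - ϱ)) (norm1 (y - ϱ)) := by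
    intro y j
    rw [fwdDiff_taylorRem, mul_comm]
    exact (abs_fwdDiff_sub_le hf ϱ y j).trans (by gcongr; exact le_max_right _ _)
  have hmono : Monotone fun n : ℤ => k * n := fun a b hab =>
    mul_le_mul_of_nonneg_left (Int.cast_le.mpr hab) hk
  have := abs_sub_le_norm1_mul_of_abs_fwdDiff_le hmono hstep x
  simpa [taylorRem, sq, mul_left_comm] using this

lemma norm_taylorRem_mul_le {f : Zd d → ℝ} {k : ℝ} (hk : 0 ≤ k)
    (hf : ∀ y i j, |Δ_[Pi.single j 1] (Δ_[Pi.single i 1] f) y| ≤ k) (ϱ : Zd d) (μ : Zd d → ℝ)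
    (x : Zd d) : ‖taylorRem f ϱ x * μ x‖ ≤ k * ((norm1 (x - ϱ) : ℝ) ^ 2 * |μ x|) := by
  rw [Real.norm_eq_abs, abs_mul, ← mul_assoc]
  exact mul_le_mul_of_nonneg_right (abs_taylorRem_le hk hf ϱ x) (abs_nonneg _)

theorem hasSum_affine_mul {α ι : Type*} [Fintype ι] {μ : α → ℝ} (hμ : HasSum μ 0)
    {φ : ι → α → ℝ} {M : ι → ℝ} (hM : ∀ i, HasSum (fun x => φ i x * μ x) (M i))
    (a : ℝ) (D : ι → ℝ) :
    HasSum (fun x => (a + ∑ i, D i * φ i x) * μ x) (∑ i, D i * M i) := by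
  simpa [add_mul, Finset.sum_mul, mul_assoc] using
    (hμ.mul_left a).add (hasSum_sum fun i _ => (hM i).mul_left (D i))

lemma summable_coord_mul {μ : Zd d → ℝ} {ϱ : Zd d} (hμ : Summable fun x => |μ x|)
    (h2 : Summable fun x => (norm1 (x - ϱ) : ℝ) ^ 2 * |μ x|) (i : Fin d) :
    Summable fun x : Zd d => (x i : ℝ) * μ x := by
  refine (h2.add (hμ.mul_left (1 + |(ϱ i : ℝ)|))).of_norm_bounded fun x => ?_
  have hcoord : |(x i : ℝ)| ≤ (norm1 (x - ϱ) : ℝ) + |(ϱ i : ℝ)| := by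
    have := abs_apply_le_norm1 (x - ϱ) i
    have := abs_sub_abs_le_abs_sub (x i) (ϱ i)
    simp only [Pi.sub_apply] at *
    exact_mod_cast (by linarith : |x i| ≤ norm1 (x - ϱ) + |ϱ i|)
  have hsq : (norm1 (x - ϱ) : ℝ) ≤ (norm1 (x - ϱ) : ℝ) ^ 2 + 1 := by
    nlinarith [sq_nonneg ((norm1 (x - ϱ) : ℝ) - 1)]
  rw [Real.norm_eq_abs, abs_mul]
  nlinarith [abs_nonneg (μ x)]

lemma tsum_mul_eq_tsum_taylorRem_mul_add {f μ : Zd d → ℝ} {ϱ : Zd d} (hμ : HasSum μ 0)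
    (hmom : ∀ i, Summable fun x : Zd d => (x i : ℝ) * μ x)
    (hrem : Summable fun x => taylorRem f ϱ x * μ x) :
    ∑' x, f x * μ x = ∑' x, taylorRem f ϱ x * μ x +
      ∑ i, Δ_[Pi.single i 1] f ϱ * ∑' x : Zd d, (x i : ℝ) * μ x := by
  have hlin := hasSum_affine_mul hμ (fun i => (hmom i).hasSum)
    (f ϱ - ∑ i, (ϱ i : ℝ) * Δ_[Pi.single i 1] f ϱ) fun i => Δ_[Pi.single i 1] f ϱ
  rw [← (hrem.hasSum.add hlin).tsum_eq]
  exact tsum_congr fun x => by rw [← add_mul, taylorRem_add_affine]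

lemma abs_sum_mul_le_mul_norm1R {D M : Fin d → ℝ} {m : ℝ} (hD : ∀ i, |D i| ≤ m) :
    |∑ i, D i * M i| ≤ m * norm1R M := by
  rw [norm1R, Finset.mul_sum]
  refine (Finset.abs_sum_le_sum_abs _ _).trans (Finset.sum_le_sum fun i _ => ?_)
  rw [abs_mul]
  exact mul_le_mul_of_nonneg_right (hD i) (abs_nonneg _)

theorem discrete_taylor_general {d : ℕ} (μ : Zd d → ℝ) (f : Zd d → ℝ)
    (m k J N : ℝ) (hm : 0 < m) (hk : 0 < k) (ϱ : Zd d)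
    (hμsum : Summable fun x => |μ x|)
    (ha : ∀ x y : Zd d, norm1 (x - y) = 1 → |f x - f y| < m)
    (hb : ∀ (x y z w : Zd d) (i jj : Fin d),
      x - y = Pi.single i 1 → z - w = Pi.single i 1 →
      x - z = Pi.single jj 1 → y - w = Pi.single jj 1 →
        |f x + f w - f y - f z| < k)
    (hc : ∑' x, μ x = 0)
    (hd' : norm1R (fun i => ∑' x : Zd d, (x i : ℝ) * μ x) ≤ N)
    (hsum2 : Summable fun x : Zd d => (norm1 (x - ϱ) : ℝ) ^ 2 * |μ x|)
    (he : ∑' x : Zd d, (norm1 (x - ϱ) : ℝ) ^ 2 * |μ x| < J) :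
    |∑' x, f x * μ x| ≤ m * N + k * J := by
  have hD : ∀ i, |Δ_[Pi.single i 1] f ϱ| ≤ m := fun i =>
    (ha _ _ (by rw [add_sub_cancel_left, norm1_single])).le
  have hf2 : ∀ y i j, |Δ_[Pi.single j 1] (Δ_[Pi.single i 1] f) y| ≤ k := fun y i j =>
    (congrArg abs (by simp only [fwdDiff]; ring)).trans_le
      (hb (y + Pi.single j 1 + Pi.single i 1) (y + Pi.single j 1) (y + Pi.single i 1) y
        i j (by abel) (by abel) (by abel) (by abel)).le
  have hrem_le := norm_taylorRem_mul_le hk.le hf2 ϱ μ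
  rw [tsum_mul_eq_tsum_taylorRem_mul_add (hc ▸ (summable_abs_iff.mp hμsum).hasSum)
    (summable_coord_mul hμsum hsum2) ((hsum2.mul_left k).of_norm_bounded hrem_le)]
  calc _ ≤ |∑' x, taylorRem f ϱ x * μ x| +
        |∑ i, Δ_[Pi.single i 1] f ϱ * ∑' x : Zd d, (x i : ℝ) * μ x| := abs_add_le _ _
    _ ≤ k * J + m * N := add_le_add
        ((tsum_of_norm_bounded (hsum2.hasSum.mul_left k) hrem_le).trans
          (mul_le_mul_of_nonneg_left he.le hk.le))
        ((abs_sum_mul_le_mul_norm1R hD).trans (mul_le_mul_of_nonneg_left hd' hm.le))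
    _ = m * N + k * J := add_comm _ _

/-- Lemma A.11, a discrete second-order Taylor estimate. -/
theorem discrete_taylor {d : ℕ} (μ : Zd d → ℝ) (f : Zd d → ℝ)
    (m k J N : ℝ) (hm : 0 < m) (hk : 0 < k) (hJ : 0 < J) (hN : 0 < N) (ϱ : Zd d)
    (hμsum : Summable fun x => |μ x|)
    (ha : ∀ x y : Zd d, norm1 (x - y) = 1 → |f x - f y| < m)
    (hb : ∀ (x y z w : Zd d) (i jj : Fin d),
      x - y = Pi.single i 1 → z - w = Pi.single i 1 →
      x - z = Pi.single jj 1 → y - w = Pi.single jj 1 →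
        |f x + f w - f y - f z| < k)
    (hc : ∑' x, μ x = 0)
    (hd' : norm1R (fun i => ∑' x : Zd d, (x i : ℝ) * μ x) ≤ N)
    (hsum2 : Summable fun x : Zd d => (norm1 (x - ϱ) : ℝ) ^ 2 * |μ x|)
    (he : ∑' x : Zd d, (norm1 (x - ϱ) : ℝ) ^ 2 * |μ x| < J) :
    |∑' x, f x * μ x| ≤ m * N + k * J :=
  discrete_taylor_general μ f m k J N hm hk ϱ hμsum ha hb hc hd' hsum2 he

end RWRE
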